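/- Let ε > 0, let F : ℝ^d → ℝ be C¹, let Σ ⊂ ℝ^d be bounded and open, and let ∂Σ = Γ_A ∪ Γ_B with Γ_A, Γ_B disjoint closed sets. Suppose: (i) h⁰ is C² in Σ and continuous on its closure, with L_ε h⁰ = 0 in Σ, h⁰ = 1 on Γ_A, h⁰ = 0 on Γ_B, and h⁰ > 0 in Σ; (ii) w⁰ is C² in Σ and continuous on the closure, with L_ε w⁰ = h⁰ in Σ and w⁰ = 0 on ∂Σ; (iii) for some λ ≥ 0, h^λ is C² in Σ and continuous on the closure, with L_ε h^λ = λ·h^λ in Σ, h^λ = 1 on Γ_A, h^λ = 0 on Γ_B, and h^λ ≥ 0 in Σ. Assume s := sup_Σ (w⁰/h⁰) < ∞, sup_Σ (h^λ/h⁰) < ∞, and λ·s ≤ 1/2. Then h^λ(x) ≤ (1 + 2λs)·h⁰(x) for every x ∈ Σ. -/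

import Mathlib

open Metric Set

/-- The Euclidean Laplacian of `u` at `x`. -/
noncomputable def laplacian {d : ℕ} (u : EuclideanSpace ℝ (Fin d) → ℝ)
    (x : EuclideanSpace ℝ (Fin d)) : ℝ :=
  ∑ i : Fin d, iteratedFDeriv ℝ 2 u x ![EuclideanSpace.single i 1, EuclideanSpace.single i 1]

/-- The operator `L_ε u = -ε Δu + ⟨∇F, ∇u⟩`. -/
noncomputable def Lop {d : ℕ} (ε : ℝ) (F u : EuclideanSpace ℝ (Fin d) → ℝ)
    (x : EuclideanSpace ℝ (Fin d)) : ℝ :=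
  -ε * laplacian u x + inner ℝ (gradient F x) (gradient u x)

/-!
At an interior minimum of a `C²` function the gradient vanishes and the Laplacian is nonnegative,
so `L_ε u ≤ 0` there; hence on the bounded open set `S` a function with `L_ε u > 0` inside and
`u ≥ 0` on `∂S` is nonnegative. Applied to `w⁰` this gives `w⁰ ≥ 0`, so `s ≥ 0`. With
`r = sup (h^λ / h⁰)` and `c > λ r`, the function `h⁰ + c w⁰ - h^λ` has
`L_ε`-image `c h⁰ - λ h^λ ≥ (c - λ r) h⁰ > 0` and vanishes on `∂S`, so letting `c → λ r`,
`h^λ ≤ h⁰ + λ r w⁰ ≤ (1 + λ s r) h⁰`. Thus `r ≤ 1 + λ s r`, and `λ s ≤ 1/2` turns this into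
`r ≤ 1 / (1 - λ s) ≤ 1 + 2 λ s`.
-/

open Filter Topology
open scoped Laplacian

theorem IsLocalMin.deriv_deriv_nonneg {g : ℝ → ℝ} {t : ℝ} (h : IsLocalMin g t)
    (hc : ContinuousAt g t) : 0 ≤ deriv (deriv g) t := by
  by_contra! hneg
  have hmax : IsLocalMax g t := isLocalMax_of_deriv_deriv_neg hneg h.deriv_eq_zero hc
  have hconst : g =ᶠ[𝓝 t] fun _ => g t := (h.and hmax).mono fun _ hy => le_antisymm hy.2 hy.1
  have hderiv : deriv g =ᶠ[𝓝 t] fun _ => 0 :=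
    hconst.eventuallyEq_nhds.mono fun _ hy => hy.deriv_eq.trans (deriv_const _ _)
  rw [hderiv.deriv_eq, deriv_const] at hneg
  exact lt_irrefl _ hneg

theorem IsLocalMin.fderiv_fderiv_apply_self_nonneg {E : Type*} [NormedAddCommGroup E]
    [NormedSpace ℝ E] {u : E → ℝ} {x : E} (h : IsLocalMin u x) (hu : ContDiffAt ℝ 2 u x)
    (v : E) : 0 ≤ fderiv ℝ (fderiv ℝ u) x v v := by
  set line : ℝ → E := fun t => x + t • v
  have hline : ∀ t, HasDerivAt line v t := fun t => by
    simpa only [id, one_smul] using ((hasDerivAt_id t).smul_const v).const_add x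
  have hline0 : line 0 = x := by simp [line]
  have hline_cont : ContinuousAt line 0 := (hline 0).continuousAt
  have hmin : IsLocalMin (u ∘ line) 0 := (hline0 ▸ h).comp_continuous hline_cont
  have hderiv : deriv (u ∘ line) =ᶠ[𝓝 0] fun t => fderiv ℝ u (line t) v := by
    have hdiff : ∀ᶠ y in 𝓝 x, DifferentiableAt ℝ u y :=
      (hu.eventually (by simp)).mono fun y hy => hy.differentiableAt (by norm_num)
    filter_upwards [hline_cont.tendsto.eventually (hline0 ▸ hdiff)] with t ht
    exact (ht.hasFDerivAt.comp_hasDerivAt t (hline t)).deriv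
  have hsecond : HasDerivAt (fun t => fderiv ℝ u (line t) v) (fderiv ℝ (fderiv ℝ u) x v v) 0 := by
    have hfd : DifferentiableAt ℝ (fderiv ℝ u) (line 0) :=
      hline0 ▸ (hu.fderiv_right (m := 1) (by norm_num)).differentiableAt one_ne_zero
    exact (ContinuousLinearMap.apply ℝ ℝ v).hasFDerivAt.comp_hasDerivAt 0
      (hline0 ▸ hfd.hasFDerivAt.comp_hasDerivAt 0 (hline 0))
  have := hmin.deriv_deriv_nonneg (hu.continuousAt.comp_of_eq hline_cont hline0)
  rwa [hderiv.deriv_eq, hsecond.deriv] at this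

theorem IsLocalMin.laplacian_nonneg {E : Type*} [NormedAddCommGroup E] [InnerProductSpace ℝ E]
    [FiniteDimensional ℝ E] {u : E → ℝ} {x : E} (h : IsLocalMin u x)
    (hu : ContDiffAt ℝ 2 u x) : 0 ≤ Δ u x := by
  rw [InnerProductSpace.laplacian_eq_iteratedFDeriv_stdOrthonormalBasis]
  exact Finset.sum_nonneg fun i _ => by
    simpa [iteratedFDeriv_two_apply] using h.fderiv_fderiv_apply_self_nonneg hu _

theorem le_sSup_div_mul {α : Type*} {f g : α → ℝ} {S : Set α}
    (hbdd : BddAbove ((fun x => f x / g x) '' S)) {y : α} (hy : y ∈ S) (hg : 0 < g y) :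
    f y ≤ sSup ((fun x => f x / g x) '' S) * g y :=
  (div_le_iff₀ hg).mp (le_csSup hbdd (mem_image_of_mem _ hy))

section

variable {d : ℕ} {ε : ℝ} {F u v : EuclideanSpace ℝ (Fin d) → ℝ} {x : EuclideanSpace ℝ (Fin d)}
  {S : Set (EuclideanSpace ℝ (Fin d))}

theorem laplacian_eq_laplacian (u : EuclideanSpace ℝ (Fin d) → ℝ) : laplacian u = Δ u := by
  ext x
  simp [InnerProductSpace.laplacian_eq_iteratedFDeriv_orthonormalBasis u
    (EuclideanSpace.basisFun (Fin d) ℝ), laplacian]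

theorem Lop_eq (ε : ℝ) (F u : EuclideanSpace ℝ (Fin d) → ℝ) (x : EuclideanSpace ℝ (Fin d)) :
    Lop ε F u x = -ε * Δ u x + fderiv ℝ u x (gradient F x) := by
  rw [Lop, laplacian_eq_laplacian, real_inner_comm, inner_gradient_left]

theorem Lop_add (hu : ContDiffAt ℝ 2 u x) (hv : ContDiffAt ℝ 2 v x) :
    Lop ε F (u + v) x = Lop ε F u x + Lop ε F v x := by
  simp only [Lop_eq, hu.laplacian_add hv,
    fderiv_add (hu.differentiableAt (by norm_num)) (hv.differentiableAt (by norm_num)), add_apply]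
  ring

theorem Lop_sub (hu : ContDiffAt ℝ 2 u x) (hv : ContDiffAt ℝ 2 v x) :
    Lop ε F (u - v) x = Lop ε F u x - Lop ε F v x := by
  simp only [Lop_eq, hu.laplacian_sub hv,
    fderiv_sub (hu.differentiableAt (by norm_num)) (hv.differentiableAt (by norm_num)), sub_apply]
  ring

theorem Lop_const_smul (c : ℝ) (hu : ContDiffAt ℝ 2 u x) :
    Lop ε F (c • u) x = c * Lop ε F u x := by
  simp only [Lop_eq, InnerProductSpace.laplacian_smul c hu,
    fderiv_const_smul (hu.differentiableAt (by norm_num)) c, smul_apply, smul_eq_mul]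
  ring

theorem IsLocalMin.Lop_nonpos (hε : 0 ≤ ε) (h : IsLocalMin u x) (hu : ContDiffAt ℝ 2 u x) :
    Lop ε F u x ≤ 0 := by
  rw [Lop_eq, h.fderiv_eq_zero, zero_apply, add_zero, neg_mul]
  exact neg_nonpos.mpr (mul_nonneg hε (h.laplacian_nonneg hu))

theorem nonneg_of_Lop_pos (hε : 0 ≤ ε) (hSbd : Bornology.IsBounded S) (hSopen : IsOpen S)
    (hu : ContDiffOn ℝ 2 u S) (huc : ContinuousOn u (closure S))
    (hLu : ∀ x ∈ S, 0 < Lop ε F u x) (hbd : ∀ x ∈ frontier S, 0 ≤ u x) :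
    ∀ x ∈ S, 0 ≤ u x := by
  intro x hx
  obtain ⟨x₀, hx₀, hmin⟩ :=
    hSbd.isCompact_closure.exists_isMinOn ⟨x, subset_closure hx⟩ huc
  refine le_trans ?_ (hmin (subset_closure hx))
  by_cases hx₀S : x₀ ∈ S
  · have hloc : IsLocalMin u x₀ :=
      hmin.isLocalMin (mem_of_superset (hSopen.mem_nhds hx₀S) subset_closure)
    exact absurd (hloc.Lop_nonpos hε (hu.contDiffAt (hSopen.mem_nhds hx₀S)))
      (hLu x₀ hx₀S).not_ge
  · exact hbd x₀ (hSopen.frontier_eq ▸ ⟨hx₀, hx₀S⟩)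

theorem le_of_Lop_lt (hε : 0 ≤ ε) (hSbd : Bornology.IsBounded S) (hSopen : IsOpen S)
    (hu : ContDiffOn ℝ 2 u S) (huc : ContinuousOn u (closure S))
    (hv : ContDiffOn ℝ 2 v S) (hvc : ContinuousOn v (closure S))
    (hL : ∀ x ∈ S, Lop ε F v x < Lop ε F u x) (hbd : ∀ x ∈ frontier S, v x ≤ u x) :
    ∀ x ∈ S, v x ≤ u x := by
  have key := nonneg_of_Lop_pos (F := F) (u := u - v) hε hSbd hSopen (hu.sub hv) (huc.sub hvc)
    (fun x hx => by
      rw [Lop_sub (hu.contDiffAt (hSopen.mem_nhds hx)) (hv.contDiffAt (hSopen.mem_nhds hx))]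
      exact sub_pos.mpr (hL x hx))
    (fun x hx => sub_nonneg.mpr (hbd x hx))
  exact fun x hx => sub_nonneg.mp (key x hx)

theorem le_add_mul_of_Lop_eq_mul (hε : 0 ≤ ε) (hSbd : Bornology.IsBounded S) (hSopen : IsOpen S)
    {h w g : EuclideanSpace ℝ (Fin d) → ℝ} {lam r : ℝ} (hlam : 0 ≤ lam)
    (hh : ContDiffOn ℝ 2 h S) (hhc : ContinuousOn h (closure S))
    (hLh : ∀ x ∈ S, Lop ε F h x = 0) (hpos : ∀ x ∈ S, 0 < h x)
    (hw : ContDiffOn ℝ 2 w S) (hwc : ContinuousOn w (closure S))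
    (hLw : ∀ x ∈ S, Lop ε F w x = h x) (hwbd : ∀ x ∈ frontier S, w x = 0)
    (hg : ContDiffOn ℝ 2 g S) (hgc : ContinuousOn g (closure S))
    (hLg : ∀ x ∈ S, Lop ε F g x = lam * g x) (hgbd : ∀ x ∈ frontier S, g x ≤ h x)
    (hgr : ∀ x ∈ S, g x ≤ r * h x) :
    ∀ x ∈ S, g x ≤ h x + lam * r * w x := by
  intro x hx
  have hstrict : ∀ c > lam * r, g x ≤ h x + c * w x := fun c hc =>
    le_of_Lop_lt (F := F) (u := h + c • w) hε hSbd hSopen (hh.add (hw.const_smul c))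
      (hhc.add (hwc.const_smul c)) hg hgc
      (fun y hy => by
        have hhy := hh.contDiffAt (hSopen.mem_nhds hy)
        have hwy := hw.contDiffAt (hSopen.mem_nhds hy)
        have hcwy : ContDiffAt ℝ 2 (c • w) y := hwy.const_smul c
        rw [Lop_add hhy hcwy, Lop_const_smul c hwy, hLh y hy, hLw y hy, hLg y hy]
        nlinarith [mul_le_mul_of_nonneg_left (hgr y hy) hlam, hpos y hy])
      (fun y hy => by simpa [hwbd y hy] using hgbd y hy) x hx
  have hlim : Tendsto (fun c => h x + c * w x) (𝓝[>] (lam * r)) (𝓝 (h x + lam * r * w x)) :=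
    ((continuous_const.add (continuous_id.mul continuous_const)).tendsto _).mono_left
      nhdsWithin_le_nhds
  exact ge_of_tendsto hlim (eventually_nhdsWithin_of_forall hstrict)

end

theorem stmt_7_general {d : ℕ} (ε : ℝ) (hε : 0 < ε)
    (F : EuclideanSpace ℝ (Fin d) → ℝ)
    (S : Set (EuclideanSpace ℝ (Fin d)))
    (hSbd : Bornology.IsBounded S) (hSopen : IsOpen S)
    (ΓA ΓB : Set (EuclideanSpace ℝ (Fin d)))
    (hbdry : frontier S = ΓA ∪ ΓB)
    (h0 w0 hl : EuclideanSpace ℝ (Fin d) → ℝ) (lam : ℝ) (hlam : 0 ≤ lam)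
    -- (i)
    (hh02 : ContDiffOn ℝ 2 h0 S) (hh0c : ContinuousOn h0 (closure S))
    (hh0eq : ∀ x ∈ S, Lop ε F h0 x = 0)
    (hh0A : ∀ x ∈ ΓA, h0 x = 1) (hh0B : ∀ x ∈ ΓB, h0 x = 0)
    (hh0pos : ∀ x ∈ S, 0 < h0 x)
    -- (ii)
    (hw02 : ContDiffOn ℝ 2 w0 S) (hw0c : ContinuousOn w0 (closure S))
    (hw0eq : ∀ x ∈ S, Lop ε F w0 x = h0 x)
    (hw0bd : ∀ x ∈ frontier S, w0 x = 0)
    -- (iii)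
    (hhl2 : ContDiffOn ℝ 2 hl S) (hhlc : ContinuousOn hl (closure S))
    (hhleq : ∀ x ∈ S, Lop ε F hl x = lam * hl x)
    (hhlA : ∀ x ∈ ΓA, hl x = 1) (hhlB : ∀ x ∈ ΓB, hl x = 0)
    (hhlnn : ∀ x ∈ S, 0 ≤ hl x)
    -- finiteness and smallness
    (hsfin : BddAbove ((fun x => w0 x / h0 x) '' S))
    (hratfin : BddAbove ((fun x => hl x / h0 x) '' S))
    (hsmall : lam * sSup ((fun x => w0 x / h0 x) '' S) ≤ 1 / 2) :
    ∀ x ∈ S, hl x ≤ (1 + 2 * lam * sSup ((fun x => w0 x / h0 x) '' S)) * h0 x := by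
  intro x hx
  set s := sSup ((fun x => w0 x / h0 x) '' S)
  set r := sSup ((fun x => hl x / h0 x) '' S)
  have hw0 : ∀ y ∈ S, 0 ≤ w0 y := nonneg_of_Lop_pos hε.le hSbd hSopen hw02 hw0c
    (fun y hy => hw0eq y hy ▸ hh0pos y hy) (fun y hy => (hw0bd y hy).ge)
  have hw0s : ∀ y ∈ S, w0 y ≤ s * h0 y := fun y hy => le_sSup_div_mul hsfin hy (hh0pos y hy)
  have hhlr : ∀ y ∈ S, hl y ≤ r * h0 y := fun y hy => le_sSup_div_mul hratfin hy (hh0pos y hy)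
  have hs : 0 ≤ s :=
    le_csSup_of_le hsfin (mem_image_of_mem _ hx) (div_nonneg (hw0 x hx) (hh0pos x hx).le)
  have hr : 0 ≤ r :=
    le_csSup_of_le hratfin (mem_image_of_mem _ hx) (div_nonneg (hhlnn x hx) (hh0pos x hx).le)
  have hhl_le : ∀ y ∈ S, hl y ≤ h0 y + lam * r * w0 y :=
    le_add_mul_of_Lop_eq_mul hε.le hSbd hSopen hlam hh02 hh0c hh0eq hh0pos hw02 hw0c hw0eq hw0bd
      hhl2 hhlc hhleq (fun y hy => by
        rcases hbdry ▸ hy with hyA | hyB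
        · rw [hh0A y hyA, hhlA y hyA]
        · rw [hh0B y hyB, hhlB y hyB]) hhlr
  have hr_le : r ≤ 1 + lam * s * r := by
    refine csSup_le (image_nonempty.mpr ⟨x, hx⟩) ?_
    rintro _ ⟨y, hy, rfl⟩
    rw [div_le_iff₀ (hh0pos y hy)]
    nlinarith [hhl_le y hy, mul_le_mul_of_nonneg_left (hw0s y hy) (mul_nonneg hlam hr)]
  have hr_le' : r ≤ 1 + 2 * lam * s := by
    nlinarith [mul_nonneg (mul_nonneg hlam hs) (by linarith : (0 : ℝ) ≤ 1 - 2 * (lam * s))]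
  calc hl x ≤ r * h0 x := hhlr x hx
    _ ≤ (1 + 2 * lam * s) * h0 x := mul_le_mul_of_nonneg_right hr_le' (hh0pos x hx).le

/-- comparison of the resolvent equilibrium potential `h^λ` with the
harmonic equilibrium potential `h⁰` (display (3.4) in the proof of Lemma 3.1). -/
theorem stmt_7 {d : ℕ} (ε : ℝ) (hε : 0 < ε)
    (F : EuclideanSpace ℝ (Fin d) → ℝ) (hF : ContDiff ℝ 1 F)
    (S : Set (EuclideanSpace ℝ (Fin d)))
    (hSbd : Bornology.IsBounded S) (hSopen : IsOpen S)
    (ΓA ΓB : Set (EuclideanSpace ℝ (Fin d)))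
    (hA : IsClosed ΓA) (hB : IsClosed ΓB) (hAB : Disjoint ΓA ΓB)
    (hbdry : frontier S = ΓA ∪ ΓB)
    (h0 w0 hl : EuclideanSpace ℝ (Fin d) → ℝ) (lam : ℝ) (hlam : 0 ≤ lam)
    -- (i)
    (hh02 : ContDiffOn ℝ 2 h0 S) (hh0c : ContinuousOn h0 (closure S))
    (hh0eq : ∀ x ∈ S, Lop ε F h0 x = 0)
    (hh0A : ∀ x ∈ ΓA, h0 x = 1) (hh0B : ∀ x ∈ ΓB, h0 x = 0)
    (hh0pos : ∀ x ∈ S, 0 < h0 x)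
    -- (ii)
    (hw02 : ContDiffOn ℝ 2 w0 S) (hw0c : ContinuousOn w0 (closure S))
    (hw0eq : ∀ x ∈ S, Lop ε F w0 x = h0 x)
    (hw0bd : ∀ x ∈ frontier S, w0 x = 0)
    -- (iii)
    (hhl2 : ContDiffOn ℝ 2 hl S) (hhlc : ContinuousOn hl (closure S))
    (hhleq : ∀ x ∈ S, Lop ε F hl x = lam * hl x)
    (hhlA : ∀ x ∈ ΓA, hl x = 1) (hhlB : ∀ x ∈ ΓB, hl x = 0)
    (hhlnn : ∀ x ∈ S, 0 ≤ hl x)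
    -- finiteness and smallness
    (hsfin : BddAbove ((fun x => w0 x / h0 x) '' S))
    (hratfin : BddAbove ((fun x => hl x / h0 x) '' S))
    (hsmall : lam * sSup ((fun x => w0 x / h0 x) '' S) ≤ 1 / 2) :
    ∀ x ∈ S, hl x ≤ (1 + 2 * lam * sSup ((fun x => w0 x / h0 x) '' S)) * h0 x :=
  stmt_7_general ε hε F S hSbd hSopen ΓA ΓB hbdry h0 w0 hl lam hlam hh02 hh0c hh0eq hh0A hh0B hh0pos
    hw02 hw0c hw0eq hw0bd hhl2 hhlc hhleq hhlA hhlB hhlnn hsfin hratfin hsmall
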